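/- arXiv:2005.10197 — 2 statements merged into one kernel-verified Lean document; each statement's English description precedes it below -/
import Mathlib

section
/- Let n be a positive integer and suppose the negative Pell equation X² − (4n+1)Y² = −1 has an integer solution. Let A be the 2×2 integer matrix with rows (1,1) and (0,−n) and let Ā = A ⊕ A be the 4×4 block sum. Then there exist vectors v, w ∈ ℤ⁴ such that vᵀĀv = 0, vᵀĀw = 1, wᵀĀv = 0. -/
theorem stmt_12 (n : ℤ) (hn : 0 < n)
    (hPell : ∃ X Y : ℤ, X ^ 2 - (4 * n + 1) * Y ^ 2 = -1) :
    let Abar : Matrix (Fin 4) (Fin 4) ℤ :=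
      !![1, 1, 0, 0; 0, -n, 0, 0; 0, 0, 1, 1; 0, 0, 0, -n]
    ∃ v w : Fin 4 → ℤ,
      dotProduct v (Abar.mulVec v) = 0 ∧
      dotProduct v (Abar.mulVec w) = 1 ∧
      dotProduct w (Abar.mulVec v) = 0 := by
  intro Abar
  obtain ⟨X, Y, h⟩ := hPell
  refine ⟨![1, 0, X - Y, 2 * Y], ![0, 1, 0, 0], ?_, ?_, ?_⟩ <;>
    simp [Abar, dotProduct, Matrix.mulVec, Fin.sum_univ_four,
      Fin.sum_univ_succ] <;> nlinarith [h]
end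

section
/- Let p be a prime, V a finite-dimensional vector space over 𝔽_p, and σ: V → ℚ a function with σ(0) = 0. Let A₁, …, A_m be the one-dimensional subspaces of V, set L_j = ∑_{v ∈ A_j} σ(v), and suppose all L_j are ≥ 0 (or all ≤ 0); set L = min_j |L_j|. Let χ = (χ₁, …, χ_n) ∈ Vⁿ have exactly R nonzero components. Then there exists k ∈ {1, …, p−1} such that |∑_{i=1}^{n} σ(k·χᵢ)| ≥ (R/(p−1))·L. -/
open Finset in
open scoped Classical in
lemma aux_sum_span (p : ℕ) [Fact p.Prime] (V : Type*) [AddCommGroup V]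
    [Module (ZMod p) V] [Fintype V] (σ : V → ℚ) (v : V) (hv : v ≠ 0) :
    ∑ c : ZMod p, σ (c • v)
      = ∑ w ∈ univ.filter (· ∈ Submodule.span (ZMod p) {v}), σ w := by
  classical
  have h1 : ∑ c : ZMod p, σ (c • v)
      = ∑ x : ↥(Submodule.span (ZMod p) {v}), σ (x : V) := by
    refine Fintype.sum_equiv
      (LinearEquiv.toSpanNonzeroSingleton (ZMod p) V v hv).toEquiv _ _ ?_
    intro c
    rfl
  rw [h1]
  exact (Finset.sum_subtype _ (fun x => by simp) σ).symm

open scoped Classical in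
theorem stmt_17 (p : ℕ) [Fact p.Prime] (V : Type*) [AddCommGroup V]
    [Module (ZMod p) V] [Fintype V]
    (σ : V → ℚ) (hσ0 : σ 0 = 0)
    (hsign :
      (∀ A : Submodule (ZMod p) V, Module.finrank (ZMod p) A = 1 →
          0 ≤ ∑ v ∈ Finset.univ.filter (· ∈ A), σ v) ∨
      (∀ A : Submodule (ZMod p) V, Module.finrank (ZMod p) A = 1 →
          ∑ v ∈ Finset.univ.filter (· ∈ A), σ v ≤ 0))
    (L : ℚ) (hL0 : 0 ≤ L)
    (hL : ∀ A : Submodule (ZMod p) V, Module.finrank (ZMod p) A = 1 →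
        L ≤ |∑ v ∈ Finset.univ.filter (· ∈ A), σ v|)
    (n : ℕ) (χ : Fin n → V) (R : ℕ)
    (hR : (Finset.univ.filter fun i => χ i ≠ 0).card = R) :
    ∃ k : ℕ, 1 ≤ k ∧ k ≤ p - 1 ∧
      (R : ℚ) / (p - 1) * L ≤ |∑ i, σ ((k : ZMod p) • χ i)| := by
  have hp : p.Prime := Fact.out
  have hp2 : 2 ≤ p := hp.two_le
  have hpq : (1 : ℚ) ≤ (p : ℚ) - 1 := by
    have : (2 : ℚ) ≤ (p : ℚ) := by exact_mod_cast hp2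
    linarith
  have hpq0 : (0 : ℚ) < (p : ℚ) - 1 := by linarith
  set f : ZMod p → ℚ := fun c => ∑ i, σ (c • χ i) with hf
  have hrank : ∀ i : Fin n, χ i ≠ 0 →
      Module.finrank (ZMod p) (Submodule.span (ZMod p) {χ i}) = 1 :=
    fun i hi => finrank_span_singleton hi
  -- total sum over all c
  have hS : ∑ c : ZMod p, f c
      = ∑ i ∈ Finset.univ.filter (fun i => χ i ≠ 0),
          ∑ w ∈ Finset.univ.filter (· ∈ Submodule.span (ZMod p) {χ i}), σ w := by
    rw [hf]
    rw [Finset.sum_comm]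
    rw [← Finset.sum_filter_of_ne (s := Finset.univ)
      (f := fun i => ∑ c : ZMod p, σ (c • χ i)) (p := fun i => χ i ≠ 0)]
    · exact Finset.sum_congr rfl fun i hi =>
        aux_sum_span p V σ (χ i) (Finset.mem_filter.mp hi).2
    · intro i _ h
      intro h0
      apply h
      simp [h0, hσ0]
  -- lower bound for |∑ c, f c|
  have habs : (R : ℚ) * L ≤ |∑ c : ZMod p, f c| := by
    rw [hS]
    rcases hsign with hs | hs
    · rw [abs_of_nonneg (Finset.sum_nonneg fun i hi =>
        hs _ (hrank i (Finset.mem_filter.mp hi).2))]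
      calc (R : ℚ) * L = ∑ _i ∈ Finset.univ.filter (fun i => χ i ≠ 0), L := by
            rw [Finset.sum_const, hR, nsmul_eq_mul]
        _ ≤ _ := Finset.sum_le_sum fun i hi => by
            have h1 := hL _ (hrank i (Finset.mem_filter.mp hi).2)
            have h2 := hs _ (hrank i (Finset.mem_filter.mp hi).2)
            rwa [abs_of_nonneg h2] at h1
    · rw [abs_of_nonpos (Finset.sum_nonpos fun i hi =>
        hs _ (hrank i (Finset.mem_filter.mp hi).2))]
      calc (R : ℚ) * L = ∑ _i ∈ Finset.univ.filter (fun i => χ i ≠ 0), L := by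
            rw [Finset.sum_const, hR, nsmul_eq_mul]
        _ ≤ ∑ i ∈ Finset.univ.filter (fun i => χ i ≠ 0),
            -(∑ w ∈ Finset.univ.filter (· ∈ Submodule.span (ZMod p) {χ i}), σ w) :=
          Finset.sum_le_sum fun i hi => by
            have h1 := hL _ (hrank i (Finset.mem_filter.mp hi).2)
            have h2 := hs _ (hrank i (Finset.mem_filter.mp hi).2)
            rwa [abs_of_nonpos h2] at h1
        _ = _ := by rw [← Finset.sum_neg_distrib]
  -- f 0 = 0, so sum over erase 0
  have hf0 : f 0 = 0 := by simp [hf, hσ0]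
  have hS' : ∑ c : ZMod p, f c = ∑ c ∈ Finset.univ.erase (0 : ZMod p), f c := by
    rw [← Finset.add_sum_erase _ f (Finset.mem_univ (0 : ZMod p)), hf0, zero_add]
  have hcard : ((Finset.univ.erase (0 : ZMod p)).card : ℚ) = (p : ℚ) - 1 := by
    rw [Finset.card_erase_of_mem (Finset.mem_univ _), Finset.card_univ, ZMod.card]
    have : (1 : ℕ) ≤ p := le_of_lt (lt_of_lt_of_le one_lt_two hp2)
    push_cast [Nat.cast_sub this]
    ring
  by_contra hcon
  push_neg at hcon
  -- every c ≠ 0 gives |f c| < R/(p-1) * L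
  have hsmall : ∀ c ∈ Finset.univ.erase (0 : ZMod p),
      |f c| < (R : ℚ) / (p - 1) * L := by
    intro c hc
    have hc0 : c ≠ 0 := (Finset.mem_erase.mp hc).1
    have hk1 : 1 ≤ c.val := Nat.pos_of_ne_zero
      (fun h => hc0 ((ZMod.val_eq_zero c).mp h))
    have hk2 : c.val ≤ p - 1 := Nat.le_sub_one_of_lt (ZMod.val_lt c)
    have := hcon c.val hk1 hk2
    have hcast : ((c.val : ℕ) : ZMod p) = c := ZMod.natCast_rightInverse c
    rw [hcast] at this
    exact this
  have hne : (Finset.univ.erase (0 : ZMod p)).Nonempty := by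
    refine ⟨1, Finset.mem_erase.mpr ⟨?_, Finset.mem_univ _⟩⟩
    exact one_ne_zero
  have hsum_lt : ∑ c ∈ Finset.univ.erase (0 : ZMod p), |f c|
      < ((Finset.univ.erase (0 : ZMod p)).card : ℚ) * ((R : ℚ) / (p - 1) * L) := by
    calc ∑ c ∈ Finset.univ.erase (0 : ZMod p), |f c|
        < ∑ _c ∈ Finset.univ.erase (0 : ZMod p), (R : ℚ) / (p - 1) * L :=
          Finset.sum_lt_sum_of_nonempty hne hsmall
      _ = _ := by rw [Finset.sum_const, nsmul_eq_mul]
  rw [hcard] at hsum_lt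
  have hfinal : ((p : ℚ) - 1) * ((R : ℚ) / (p - 1) * L) = (R : ℚ) * L := by
    field_simp
  rw [hfinal] at hsum_lt
  have : |∑ c : ZMod p, f c| ≤ ∑ c ∈ Finset.univ.erase (0 : ZMod p), |f c| := by
    rw [hS']
    exact Finset.abs_sum_le_sum_abs _ _
  linarith
end
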